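/- Let X ∈ 𝔇 be a Lie–Bäcklund differentiation with respect to 𝒟, i.e. ⁅Y, X⁆ ∈ 𝒟 for all Y ∈ 𝒟. Then for every p-Cartan form ω ∈ Ω^r (0 ≤ p ≤ r), the Lie derivative L_X ω is again a p-Cartan form in Ω^r. -/

import Mathlib

/-- The raw Cartan formula for the exterior differential: for an `r`-argument map
`ω : 𝔇^r → A` on the derivations `𝔇 = Der_𝔽(A)`, `cartanD ω : 𝔇^{r+1} → A` is
`dω(X_0,…,X_r) = (r+1)⁻¹ ( Σ_s (−1)^s X_s (ω(X_0,…,X̂_s,…,X_r))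
  + Σ_{s<t} (−1)^{s+t} ω(⁅X_s,X_t⁆, X_0,…,X̂_s,…,X̂_t,…,X_r) )`. -/
noncomputable def cartanD {𝔽 : Type*} [Field 𝔽] [CharZero 𝔽]
    {A : Type*} [CommRing A] [Algebra 𝔽 A] {r : ℕ}
    (ω : (Fin r → Derivation 𝔽 A A) → A) :
    (Fin (r + 1) → Derivation 𝔽 A A) → A :=
  fun X =>
    ((r + 1 : 𝔽))⁻¹ • (
      (∑ s : Fin (r + 1), (-1 : A) ^ (s : ℕ) * X s (ω (s.removeNth X))) +
      ∑ s : Fin (r + 1), ∑ t : Fin (r + 1),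
        if s < t then
          (-1 : A) ^ ((s : ℕ) + (t : ℕ)) *
            ω (fun u : Fin r =>
              if (u : ℕ) = 0 then ⁅X s, X t⁆
              else X ⟨if (u : ℕ) - 1 < (s : ℕ) then (u : ℕ) - 1
                      else if (u : ℕ) < (t : ℕ) then (u : ℕ) else (u : ℕ) + 1,
                      by have h1 := u.isLt; split
                         · omega
                         · split <;> omega⟩)
        else 0)

/-- The interior product `i_X ω (X_1,…,X_{r-1}) = r · ω(X, X_1,…,X_{r-1})` (raw form). -/
def iProdRaw {𝔽 : Type*} [Field 𝔽] [CharZero 𝔽]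
    {A : Type*} [CommRing A] [Algebra 𝔽 A] {r : ℕ}
    (X : Derivation 𝔽 A A) (ω : (Fin r → Derivation 𝔽 A A) → A) :
    (Fin (r - 1) → Derivation 𝔽 A A) → A :=
  fun Y => (r : A) * ω (fun u => if h : (u : ℕ) = 0 then X
    else Y ⟨(u : ℕ) - 1, by have h1 := u.isLt; omega⟩)

/-- The Lie derivative
`L_X ω (X_1,…,X_r) = X (ω (X_1,…,X_r)) − Σ_s ω(X_1,…,⁅X,X_s⁆,…,X_r)` (raw form). -/
def lieDerivRaw {𝔽 : Type*} [Field 𝔽] [CharZero 𝔽]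
    {A : Type*} [CommRing A] [Algebra 𝔽 A] {r : ℕ}
    (X : Derivation 𝔽 A A) (ω : (Fin r → Derivation 𝔽 A A) → A) :
    (Fin r → Derivation 𝔽 A A) → A :=
  fun Y => X (ω Y) - ∑ s : Fin r, ω (Function.update Y s ⁅X, Y s⁆)

/-- `ω : 𝔇^r → A` is a `p`-Cartan form (w.r.t. the Cartan subalgebra `𝒟`) if
`ω(X_1,…,X_r) = 0` whenever at least `r - p + 1` of the arguments belong to `𝒟`. -/
def IsPCartan {𝔽 : Type*} [Field 𝔽] [CharZero 𝔽]
    {A : Type*} [CommRing A] [Algebra 𝔽 A] {r : ℕ}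
    (𝒟 : Submodule A (Derivation 𝔽 A A)) (p : ℕ)
    (ω : (Fin r → Derivation 𝔽 A A) → A) : Prop :=
  ∀ (Y : Fin r → Derivation 𝔽 A A) (S : Finset (Fin r)),
    r - p + 1 ≤ S.card → (∀ s ∈ S, Y s ∈ 𝒟) → ω Y = 0

/-!
`L_X ω` is `A`-multilinear because the failure of `Y ↦ ⁅X, Y⁆` to be `A`-linear,
`⁅X, a • Y⁆ = a • ⁅X, Y⁆ + X a • Y`, is cancelled by the Leibniz rule for `X (ω Y)`; it is
alternating because the two bracket terms at repeated arguments differ by a transposition.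
If at least `r - p + 1` arguments `Y_s` lie in `𝒟`, then `ω Y = 0`, and each `ω(…,⁅X,Y_s⁆,…)`
still has those arguments in `𝒟` (the Lie–Bäcklund condition keeps `⁅X, Y_s⁆` in `𝒟`),
so every term of `L_X ω (Y)` vanishes.
-/

open Function

lemma Derivation.commutator_smul_right {𝔽 A : Type*} [CommRing 𝔽] [CommRing A] [Algebra 𝔽 A]
    (X Y : Derivation 𝔽 A A) (a : A) :
    ⁅X, a • Y⁆ = a • ⁅X, Y⁆ + X a • Y := by
  ext f
  simp [Derivation.commutator_apply, smul_eq_mul]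

lemma AlternatingMap.sum_map_update_apply_eq_zero {R M N ι : Type*} [Semiring R]
    [AddCommMonoid M] [Module R M] [AddCommGroup N] [Module R N] [DecidableEq ι] [Fintype ι]
    (g : M [⋀^ι]→ₗ[R] N) (φ : M → M) (v : ι → M) {i j : ι} (hv : v i = v j) (hij : i ≠ j) :
    ∑ s, g (update v s (φ (v s))) = 0 := by
  rw [← Finset.sum_subset (Finset.subset_univ {i, j}), Finset.sum_pair hij]
  · have hswap : update v i (φ (v i)) = update v j (φ (v j)) ∘ Equiv.swap i j := by
      rw [Equiv.comp_swap_eq_update]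
      simp [update_of_ne hij, hv]
    rw [hswap, g.map_swap _ hij, neg_add_cancel]
  · intro s _ hs
    simp only [Finset.mem_insert, Finset.mem_singleton, not_or] at hs
    exact g.map_eq_zero_of_eq _
      (by simp [update_of_ne (Ne.symm hs.1), update_of_ne (Ne.symm hs.2), hv]) hij

section LieDeriv

variable {𝔽 : Type*} [Field 𝔽] [CharZero 𝔽] {A : Type*} [CommRing A] [Algebra 𝔽 A] {r : ℕ}

lemma lieDerivRaw_update (X : Derivation 𝔽 A A) (ω : (Fin r → Derivation 𝔽 A A) → A)
    (Y : Fin r → Derivation 𝔽 A A) (i : Fin r) (v : Derivation 𝔽 A A) :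
    lieDerivRaw X ω (update Y i v) =
      X (ω (update Y i v)) - ω (update Y i ⁅X, v⁆) -
        ∑ s ∈ Finset.univ.erase i, ω (update (update Y s ⁅X, Y s⁆) i v) := by
  have hself : update (update Y i v) i ⁅X, update Y i v i⁆ = update Y i ⁅X, v⁆ := by
    rw [update_self, update_idem]
  have hothers : ∀ s ∈ Finset.univ.erase i,
      ω (update (update Y i v) s ⁅X, update Y i v s⁆) =
        ω (update (update Y s ⁅X, Y s⁆) i v) := by
    intro s hs
    have hsi : s ≠ i := Finset.ne_of_mem_erase hs
    rw [update_of_ne hsi, update_comm hsi]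
  rw [lieDerivRaw, ← Finset.add_sum_erase _ _ (Finset.mem_univ i), hself,
    Finset.sum_congr rfl hothers]
  ring

def lieDeriv (X : Derivation 𝔽 A A) (ω : Derivation 𝔽 A A [⋀^Fin r]→ₗ[A] A) :
    Derivation 𝔽 A A [⋀^Fin r]→ₗ[A] A where
  toFun := lieDerivRaw X ω
  map_update_add' := by
    intro inst Y i y z
    obtain rfl := Subsingleton.elim inst (instDecidableEqFin r)
    simp only [lieDerivRaw_update, ω.map_update_add, map_add, lie_add, Finset.sum_add_distrib]
    ring
  map_update_smul' := by
    intro inst Y i a y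
    obtain rfl := Subsingleton.elim inst (instDecidableEqFin r)
    simp only [lieDerivRaw_update, ω.map_update_smul, Derivation.commutator_smul_right,
      ω.map_update_add, smul_eq_mul, Derivation.leibniz, mul_sub, Finset.mul_sum]
    ring
  map_eq_zero_of_eq' Y i j hY hij := by
    rw [lieDerivRaw, ω.map_eq_zero_of_eq Y hY hij, map_zero,
      ω.sum_map_update_apply_eq_zero (fun v ↦ ⁅X, v⁆) Y hY hij, sub_zero]

lemma IsPCartan.lieDerivRaw {𝒟 : Submodule A (Derivation 𝔽 A A)} {p : ℕ}
    {ω : (Fin r → Derivation 𝔽 A A) → A} (hω : IsPCartan 𝒟 p ω)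
    {X : Derivation 𝔽 A A} (hX : ∀ Y ∈ 𝒟, ⁅Y, X⁆ ∈ 𝒟) :
    IsPCartan 𝒟 p (lieDerivRaw X ω) := by
  intro Y S hcard hS
  have hupdate : ∀ s, ∀ t ∈ S, update Y s ⁅X, Y s⁆ t ∈ 𝒟 := by
    intro s t ht
    rcases eq_or_ne t s with rfl | hts
    · rw [update_self, ← lie_skew]
      exact 𝒟.neg_mem (hX _ (hS t ht))
    · rw [update_of_ne hts]
      exact hS t ht
  rw [_root_.lieDerivRaw, hω Y S hcard hS, map_zero, zero_sub, neg_eq_zero]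
  exact Finset.sum_eq_zero fun s _ ↦ hω _ S hcard (hupdate s)

end LieDeriv

theorem lieDeriv_lieBacklund_preserves_cartan_general {𝔽 : Type*} [Field 𝔽] [CharZero 𝔽]
    {A : Type*} [CommRing A] [Algebra 𝔽 A]
    (𝒟 : Submodule A (Derivation 𝔽 A A))
    (X : Derivation 𝔽 A A) (hX : ∀ Y ∈ 𝒟, ⁅Y, X⁆ ∈ 𝒟)
    (r p : ℕ)
    (ω : AlternatingMap A (Derivation 𝔽 A A) A (Fin r))
    (hω : IsPCartan 𝒟 p (⇑ω)) :
    (∃ η : AlternatingMap A (Derivation 𝔽 A A) A (Fin r), ⇑η = lieDerivRaw X (⇑ω)) ∧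
      IsPCartan 𝒟 p (lieDerivRaw X (⇑ω)) :=
  ⟨⟨lieDeriv X ω, rfl⟩, hω.lieDerivRaw hX⟩

/-- Let `𝒟 ⊆ 𝔇` be an `A`-submodule closed under the bracket and let
`X ∈ 𝔇` be a Lie–Bäcklund differentiation with respect to `𝒟`, i.e. `⁅Y, X⁆ ∈ 𝒟` for all
`Y ∈ 𝒟`. Then for every `p`-Cartan form `ω ∈ Ω^r` (`0 ≤ p ≤ r`), the Lie derivative
`L_X ω` is again a `p`-Cartan form in `Ω^r`. -/
theorem lieDeriv_lieBacklund_preserves_cartan {𝔽 : Type*} [Field 𝔽] [CharZero 𝔽]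
    {A : Type*} [CommRing A] [Algebra 𝔽 A]
    (𝒟 : Submodule A (Derivation 𝔽 A A))
    (h𝒟 : ∀ X ∈ 𝒟, ∀ Y ∈ 𝒟, ⁅X, Y⁆ ∈ 𝒟)
    (X : Derivation 𝔽 A A) (hX : ∀ Y ∈ 𝒟, ⁅Y, X⁆ ∈ 𝒟)
    (r p : ℕ) (hpr : p ≤ r)
    (ω : AlternatingMap A (Derivation 𝔽 A A) A (Fin r))
    (hω : IsPCartan 𝒟 p (⇑ω)) :
    (∃ η : AlternatingMap A (Derivation 𝔽 A A) A (Fin r), ⇑η = lieDerivRaw X (⇑ω)) ∧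
      IsPCartan 𝒟 p (lieDerivRaw X (⇑ω)) :=
  lieDeriv_lieBacklund_preserves_cartan_general 𝒟 X hX r p ω hω
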